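/- If C₀C₁‖a‖_{W^{1,∞}(S)} ‖μ‖_{L^∞(Ω)} / min{ᾱ, κ} < 1, then the map A : G ↦ μ|σ_{ν_ε}(u_{ε,G})| on the cone 𝒞**_ε = {G ∈ L²(S_ε) : G ≥ 0 a.e.} is a contraction in L²(S_ε), and hence the regularized Coulomb friction problem admits a unique solution. -/

import Mathlib

/-!
Lipschitz continuity of `G ↦ σ_{ν_ε}(u_{ε,G})` and `‖μ‖_∞`-Lipschitz continuity of
`s ↦ μ |s|` make `A` a contraction of the nonnegative cone of `L²(S_ε)` with constant
`C₀C₁‖a‖_{W^{1,∞}(S)}‖μ‖_{L^∞(Ω)} / min{ᾱ,κ} < 1`. Since `A` acts on representatives and only on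
the cone, Banach's theorem is applied in `L²` to `f ↦ A (f⁺)`: the positive part is a 1-Lipschitz
retraction onto the cone, and any fixed point of this map is nonnegative.
-/

open MeasureTheory ENNReal

noncomputable section

/-- The positivity cone `𝒞**_ε = {G ∈ L²(S_ε) : G ≥ 0 a.e.}`. -/
def posCone {γ : Type*} [MeasurableSpace γ] (μ : Measure γ) : Set (γ → ℝ) :=
  {G | 0 ≤ᵐ[μ] G ∧ MemLp G 2 μ}

open NNReal Set

theorem ENNReal.eq_zero_of_le_mul_of_lt_one {x K : ℝ≥0∞} (hK : K < 1) (hx : x ≠ ∞)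
    (h : x ≤ K * x) : x = 0 := by
  by_contra hx0
  have hlt : K * x < 1 * x := ENNReal.mul_lt_mul_left hx0 hx hK
  exact (h.trans_lt (by rwa [one_mul] at hlt)).false

section NonnegCone

variable {α : Type*} [MeasurableSpace α] {μ : Measure α} {p : ℝ≥0∞}

/-- `posCone μ` is `nonnegMemLp μ 2`. -/
def nonnegMemLp (μ : Measure α) (p : ℝ≥0∞) : Set (α → ℝ) :=
  {G | 0 ≤ᵐ[μ] G ∧ MemLp G p μ}

theorem Lp.coeFn_posPart_mem_nonnegMemLp (f : Lp ℝ p μ) :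
    ⇑(Lp.posPart f) ∈ nonnegMemLp μ p :=
  ⟨(Lp.coeFn_posPart f).mono fun _ hx => hx ▸ le_max_right _ _, Lp.memLp _⟩

theorem Lp.posPart_eq_self {f : Lp ℝ p μ} (hf : 0 ≤ᵐ[μ] f) : Lp.posPart f = f :=
  Lp.ext <| (Lp.coeFn_posPart f).trans <| hf.mono fun _ hx => max_eq_left hx

theorem ae_eq_of_isFixedPt_of_contraction (hp : p ≠ 0) {T : (α → ℝ) → α → ℝ} {K : ℝ≥0∞}
    (hK : K < 1)
    (hT_lip : ∀ G₁ ∈ nonnegMemLp μ p, ∀ G₂ ∈ nonnegMemLp μ p,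
      eLpNorm (T G₁ - T G₂) p μ ≤ K * eLpNorm (G₁ - G₂) p μ)
    {G G' : α → ℝ} (hG : G ∈ nonnegMemLp μ p) (hG' : G' ∈ nonnegMemLp μ p)
    (hTG : T G =ᵐ[μ] G) (hTG' : T G' =ᵐ[μ] G') : G' =ᵐ[μ] G := by
  have hle : eLpNorm (G' - G) p μ ≤ K * eLpNorm (G' - G) p μ :=
    (eLpNorm_congr_ae (hTG'.sub hTG)).symm.le.trans (hT_lip G' hG' G hG)
  have hzero := ENNReal.eq_zero_of_le_mul_of_lt_one hK (hG'.2.sub hG.2).eLpNorm_ne_top hle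
  exact ((eLpNorm_eq_zero_iff (hG'.2.sub hG.2).aestronglyMeasurable hp).1 hzero).mono
    fun _ hx => sub_eq_zero.1 hx

variable {T : (α → ℝ) → α → ℝ}

def Lp.posPartCompMap (hT : MapsTo T (nonnegMemLp μ p) (nonnegMemLp μ p))
    (f : Lp ℝ p μ) : Lp ℝ p μ :=
  (hT (Lp.coeFn_posPart_mem_nonnegMemLp f)).2.toLp (T (Lp.posPart f))

theorem Lp.isFixedPt_posPartCompMap (hT : MapsTo T (nonnegMemLp μ p) (nonnegMemLp μ p))
    {f : Lp ℝ p μ} (hf : Function.IsFixedPt (Lp.posPartCompMap hT) f) :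
    ⇑f ∈ nonnegMemLp μ p ∧ T f =ᵐ[μ] f := by
  have hf_eq : ⇑(Lp.posPartCompMap hT f) =ᵐ[μ] T (Lp.posPart f) := MemLp.coeFn_toLp _
  rw [hf] at hf_eq
  have hf_nonneg : 0 ≤ᵐ[μ] f :=
    (hT (Lp.coeFn_posPart_mem_nonnegMemLp f)).1.trans_eq hf_eq.symm
  rw [Lp.posPart_eq_self hf_nonneg] at hf_eq
  exact ⟨⟨hf_nonneg, Lp.memLp f⟩, hf_eq.symm⟩

variable [Fact (1 ≤ p)]

theorem Lp.lipschitzWith_posPart : LipschitzWith 1 (Lp.posPart : Lp ℝ p μ → Lp ℝ p μ) :=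
  Lp.lipschitzWith_pos_part.lipschitzWith_compLp (max_eq_right le_rfl)

theorem Lp.lipschitzWith_posPartCompMap (hT : MapsTo T (nonnegMemLp μ p) (nonnegMemLp μ p))
    {K : ℝ≥0} (hT_lip : ∀ G₁ ∈ nonnegMemLp μ p, ∀ G₂ ∈ nonnegMemLp μ p,
      eLpNorm (T G₁ - T G₂) p μ ≤ K * eLpNorm (G₁ - G₂) p μ) :
    LipschitzWith K (Lp.posPartCompMap hT) := by
  intro f g
  have hpos : edist (Lp.posPart f) (Lp.posPart g) ≤ edist f g := by
    simpa using Lp.lipschitzWith_posPart f g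
  calc edist (Lp.posPartCompMap hT f) (Lp.posPartCompMap hT g)
      = eLpNorm (T (Lp.posPart f) - T (Lp.posPart g)) p μ := by
        rw [Lp.edist_def]
        exact eLpNorm_congr_ae ((MemLp.coeFn_toLp _).sub (MemLp.coeFn_toLp _))
    _ ≤ K * edist (Lp.posPart f) (Lp.posPart g) := by
        rw [Lp.edist_def]
        exact hT_lip _ (Lp.coeFn_posPart_mem_nonnegMemLp f) _ (Lp.coeFn_posPart_mem_nonnegMemLp g)
    _ ≤ K * edist f g := by gcongr

theorem exists_ae_fixedPoint_of_contraction {K : ℝ≥0} (hK : K < 1)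
    (hT : MapsTo T (nonnegMemLp μ p) (nonnegMemLp μ p))
    (hT_lip : ∀ G₁ ∈ nonnegMemLp μ p, ∀ G₂ ∈ nonnegMemLp μ p,
      eLpNorm (T G₁ - T G₂) p μ ≤ K * eLpNorm (G₁ - G₂) p μ) :
    ∃ G ∈ nonnegMemLp μ p, T G =ᵐ[μ] G ∧
      ∀ G' ∈ nonnegMemLp μ p, T G' =ᵐ[μ] G' → G' =ᵐ[μ] G := by
  have hcontr : ContractingWith K (Lp.posPartCompMap hT) :=
    ⟨hK, Lp.lipschitzWith_posPartCompMap hT hT_lip⟩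
  obtain ⟨hG, hTG⟩ := Lp.isFixedPt_posPartCompMap hT hcontr.fixedPoint_isFixedPt
  have hp : p ≠ 0 := (zero_lt_one.trans_le Fact.out).ne'
  exact ⟨_, hG, hTG, fun G' hG' hTG' =>
    ae_eq_of_isFixedPt_of_contraction hp (by exact_mod_cast hK) hT_lip hG hG' hTG hTG'⟩

end NonnegCone

section FrictionMap

variable {α : Type*} [MeasurableSpace α] {μ : Measure α} {p : ℝ≥0∞} {c : α → ℝ} {M : ℝ}

theorem eLpNorm_mul_abs_sub_mul_abs_le (hc : ∀ x, |c x| ≤ M) (f g : α → ℝ) :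
    eLpNorm ((fun x => c x * |f x|) - fun x => c x * |g x|) p μ
      ≤ ENNReal.ofReal M * eLpNorm (f - g) p μ := by
  refine eLpNorm_le_mul_eLpNorm_of_ae_le_mul (.of_forall fun x => ?_) p
  simp only [Pi.sub_apply, Real.norm_eq_abs, ← mul_sub, abs_mul]
  exact mul_le_mul (hc x) (abs_abs_sub_abs_le_abs_sub _ _) (abs_nonneg _)
    ((abs_nonneg _).trans (hc x))

theorem MemLp.mul_abs_of_abs_le {f : α → ℝ} (hf : MemLp f p μ) (hc_meas : Measurable c)
    (hc : ∀ x, |c x| ≤ M) : MemLp (fun x => c x * |f x|) p μ := by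
  refine hf.of_le_mul (c := M) (hc_meas.aestronglyMeasurable.mul hf.1.norm)
    (.of_forall fun x => ?_)
  simp only [Real.norm_eq_abs, abs_mul, abs_abs]
  exact mul_le_mul_of_nonneg_right (hc x) (abs_nonneg _)

theorem memLp_of_eLpNorm_sub_lt_top {f g : α → ℝ} (hf : AEStronglyMeasurable f μ)
    (hg : MemLp g p μ) (hfg : eLpNorm (f - g) p μ < ∞) : MemLp f p μ := by
  simpa using (show MemLp (f - g) p μ from ⟨hf.sub hg.1, hfg⟩).add hg

end FrictionMap

theorem statement14_general
    {γ : Type*} [MeasurableSpace γ] (μm : Measure γ)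
    (σ : (γ → ℝ) → (γ → ℝ))
    (μf : γ → ℝ) (hμfm : Measurable μf)
    (C₀ C₁ Anorm ᾱ κ Mμ : ℝ)
    (hMμ : 0 ≤ Mμ)
    (hμf : ∀ x, 0 ≤ μf x ∧ μf x ≤ Mμ)
    (hσmeas : ∀ G ∈ posCone μm, AEStronglyMeasurable (σ G) μm)
    (hσ0 : MemLp (σ 0) 2 μm)
    -- continuity of the solution map with respect to the given friction
    (hσlip : ∀ G₁ ∈ posCone μm, ∀ G₂ ∈ posCone μm,
      eLpNorm (σ G₁ - σ G₂) 2 μm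
        ≤ ENNReal.ofReal (C₀ * C₁ * Anorm / min ᾱ κ) * eLpNorm (G₁ - G₂) 2 μm)
    -- the contraction condition
    (hcond : C₀ * C₁ * Anorm * Mμ / min ᾱ κ < 1) :
    -- `A : G ↦ μf |σ G|` is a contraction on the cone ...
    (∀ G₁ ∈ posCone μm, ∀ G₂ ∈ posCone μm,
      eLpNorm ((fun x => μf x * |σ G₁ x|) - fun x => μf x * |σ G₂ x|) 2 μm
        ≤ ENNReal.ofReal (C₀ * C₁ * Anorm * Mμ / min ᾱ κ) * eLpNorm (G₁ - G₂) 2 μm) ∧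
    -- ... and hence it admits a unique fixed point in the cone (up to a.e. equality)
    (∃ G ∈ posCone μm, (fun x => μf x * |σ G x|) =ᵐ[μm] G ∧
      ∀ G' ∈ posCone μm, (fun x => μf x * |σ G' x|) =ᵐ[μm] G' → G' =ᵐ[μm] G) := by
  have hμf_abs : ∀ x, |μf x| ≤ Mμ := fun x => (abs_of_nonneg (hμf x).1).trans_le (hμf x).2
  have hA_lip : ∀ G₁ ∈ posCone μm, ∀ G₂ ∈ posCone μm,
      eLpNorm ((fun x => μf x * |σ G₁ x|) - fun x => μf x * |σ G₂ x|) 2 μm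
        ≤ ENNReal.ofReal (C₀ * C₁ * Anorm * Mμ / min ᾱ κ) * eLpNorm (G₁ - G₂) 2 μm := by
    intro G₁ hG₁ G₂ hG₂
    calc _ ≤ ENNReal.ofReal Mμ * eLpNorm (σ G₁ - σ G₂) 2 μm :=
          eLpNorm_mul_abs_sub_mul_abs_le hμf_abs _ _
      _ ≤ ENNReal.ofReal Mμ * (ENNReal.ofReal (C₀ * C₁ * Anorm / min ᾱ κ)
            * eLpNorm (G₁ - G₂) 2 μm) := by gcongr; exact hσlip G₁ hG₁ G₂ hG₂
      _ = _ := by rw [← mul_assoc, ← ENNReal.ofReal_mul hMμ, mul_div_assoc', mul_comm Mμ]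
  have hσ_memLp : ∀ G ∈ posCone μm, MemLp (σ G) 2 μm := fun G hG =>
    memLp_of_eLpNorm_sub_lt_top (hσmeas G hG) hσ0 <|
      (hσlip G hG 0 ⟨.rfl, MemLp.zero⟩).trans_lt <|
        ENNReal.mul_lt_top ofReal_lt_top (by simpa using hG.2.eLpNorm_lt_top)
  have hA_maps : MapsTo (fun G x => μf x * |σ G x|) (posCone μm) (posCone μm) := fun G hG =>
    ⟨.of_forall fun x => mul_nonneg (hμf x).1 (abs_nonneg _),
      MemLp.mul_abs_of_abs_le (hσ_memLp G hG) hμfm hμf_abs⟩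
  exact ⟨hA_lip,
    exists_ae_fixedPoint_of_contraction (Real.toNNReal_lt_one.2 hcond) hA_maps hA_lip⟩

/-- If `C₀C₁‖a‖_{W^{1,∞}(S)}‖μ‖_{L^∞(Ω)} / min{ᾱ,κ} < 1`, then the map
`A : G ↦ μ |σ_{ν_ε}(u_{ε,G})|` on the cone `𝒞**_ε = {G ∈ L²(S_ε) : G ≥ 0}` is a contraction
in `L²(S_ε)`, and hence the regularized Coulomb friction problem admits a unique solution
(i.e. `A` has a unique fixed point, up to a.e. equality).

Here `(γ, μm)` is the crack `S_ε` with its surface measure, `σ G = σ_{ν_ε}(u_{ε,G})` is the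
normal-stress map satisfying the continuity estimate with constant
`C₀C₁‖a‖_{W^{1,∞}(S)}/min{ᾱ,κ}`, and `μf` is the friction coefficient, `0 ≤ μf ≤ Mμ` with
`Mμ = ‖μ‖_{L^∞(Ω)}`. -/
theorem statement14
    {γ : Type*} [MeasurableSpace γ] (μm : Measure γ)
    (σ : (γ → ℝ) → (γ → ℝ))
    (μf : γ → ℝ) (hμfm : Measurable μf)
    (C₀ C₁ Anorm ᾱ κ Mμ : ℝ)
    (hC₀ : 0 < C₀) (hC₁ : 0 < C₁) (hA : 0 < Anorm) (hᾱ : 0 < ᾱ) (hκ : 0 < κ) (hMμ : 0 ≤ Mμ)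
    (hμf : ∀ x, 0 ≤ μf x ∧ μf x ≤ Mμ)
    (hσmeas : ∀ G ∈ posCone μm, AEStronglyMeasurable (σ G) μm)
    (hσ0 : MemLp (σ 0) 2 μm)
    -- continuity of the solution map with respect to the given friction
    (hσlip : ∀ G₁ ∈ posCone μm, ∀ G₂ ∈ posCone μm,
      eLpNorm (σ G₁ - σ G₂) 2 μm
        ≤ ENNReal.ofReal (C₀ * C₁ * Anorm / min ᾱ κ) * eLpNorm (G₁ - G₂) 2 μm)
    -- the contraction condition
    (hcond : C₀ * C₁ * Anorm * Mμ / min ᾱ κ < 1) :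
    -- `A : G ↦ μf |σ G|` is a contraction on the cone ...
    (∀ G₁ ∈ posCone μm, ∀ G₂ ∈ posCone μm,
      eLpNorm ((fun x => μf x * |σ G₁ x|) - fun x => μf x * |σ G₂ x|) 2 μm
        ≤ ENNReal.ofReal (C₀ * C₁ * Anorm * Mμ / min ᾱ κ) * eLpNorm (G₁ - G₂) 2 μm) ∧
    -- ... and hence it admits a unique fixed point in the cone (up to a.e. equality)
    (∃ G ∈ posCone μm, (fun x => μf x * |σ G x|) =ᵐ[μm] G ∧
      ∀ G' ∈ posCone μm, (fun x => μf x * |σ G' x|) =ᵐ[μm] G' → G' =ᵐ[μm] G) :=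
  statement14_general μm σ μf hμfm C₀ C₁ Anorm ᾱ κ Mμ hMμ hμf hσmeas hσ0 hσlip hcond
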